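/- arXiv:1501.02871 — 5 statements merged into one kernel-verified Lean document; each statement's English description precedes it below -/
import Mathlib

section
/- Let A = (a_{ijkl}) be a partially symmetric (2,2)-th order n×n×m×m tensor. Then the optimal value of the conic program min{ A • Z : Z ∈ B_{n,m}, E • Z = 1 } equals p_A^min, the minimum of p_A over Δ_n × Δ_m; moreover the infimum in the conic program is attained. -/
/-!
A point `(x, y) ∈ Δ_n × Δ_m` gives the feasible rank-one tensor `(xxᵀ) ⊗ (yyᵀ)` of value
`p_A(x, y)`, and `p_A` attains its minimum on the compact set `Δ_n × Δ_m`. Conversely,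
`p_A(x, y) - p_A^min (Σ x)² (Σ y)²` is bi-homogeneous of degree `(2, 2)` and nonnegative on
`Δ_n × Δ_m`, hence on `ℝ^n_+ × ℝ^m_+`. So the linear functional `Z ↦ A • Z - p_A^min (E • Z)` is
nonnegative on the generators of `B_{n,m}`, hence on all of `B_{n,m}`.
-/

open Finset

variable {ι κ : Type*} [Fintype ι] [Fintype κ]

noncomputable def biquadForm (A : ι → ι → κ → κ → ℝ) (x : ι → ℝ) (y : κ → ℝ) : ℝ :=
  ∑ i, ∑ j, ∑ k, ∑ l, A i j k l * x i * x j * y k * y l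

def rankOneTensor (x : ι → ℝ) (y : κ → ℝ) : ι → ι → κ → κ → ℝ :=
  fun i j k l => x i * x j * y k * y l

def cpCone (ι κ : Type*) : Set (ι → ι → κ → κ → ℝ) :=
  convexHull ℝ {T | ∃ (x : ι → ℝ) (y : κ → ℝ), (∀ i, 0 ≤ x i) ∧ (∀ k, 0 ≤ y k) ∧
    T = rankOneTensor x y}

noncomputable def tensorPairing (A : ι → ι → κ → κ → ℝ) :
    (ι → ι → κ → κ → ℝ) →ₗ[ℝ] ℝ where
  toFun Z := ∑ i, ∑ j, ∑ k, ∑ l, A i j k l * Z i j k l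
  map_add' Z W := by simp only [Pi.add_apply, mul_add, sum_add_distrib]
  map_smul' c Z := by
    simp only [Pi.smul_apply, smul_eq_mul, RingHom.id_apply, mul_sum, mul_left_comm]

lemma tensorPairing_apply (A Z : ι → ι → κ → κ → ℝ) :
    tensorPairing A Z = ∑ i, ∑ j, ∑ k, ∑ l, A i j k l * Z i j k l := rfl

-- The all-ones tensor `E` is `1 : ι → ι → κ → κ → ℝ`.
lemma tensorPairing_one (Z : ι → ι → κ → κ → ℝ) :
    tensorPairing 1 Z = ∑ i, ∑ j, ∑ k, ∑ l, Z i j k l := by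
  simp only [tensorPairing_apply, Pi.one_apply, one_mul]

lemma tensorPairing_sub_smul_one (A Z : ι → ι → κ → κ → ℝ) (s : ℝ) :
    tensorPairing (A - s • 1) Z = tensorPairing A Z - s * tensorPairing 1 Z := by
  simp only [tensorPairing_apply, Pi.sub_apply, Pi.smul_apply, Pi.one_apply, smul_eq_mul,
    mul_one, one_mul, sub_mul, sum_sub_distrib, mul_sum]

lemma tensorPairing_rankOneTensor (A : ι → ι → κ → κ → ℝ) (x : ι → ℝ) (y : κ → ℝ) :
    tensorPairing A (rankOneTensor x y) = biquadForm A x y := by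
  simp only [tensorPairing_apply, rankOneTensor, biquadForm, mul_assoc]

lemma biquadForm_one (x : ι → ℝ) (y : κ → ℝ) :
    biquadForm 1 x y = (∑ i, x i) ^ 2 * (∑ k, y k) ^ 2 := by
  simp only [biquadForm, Pi.one_apply, one_mul, ← sum_mul, ← mul_sum]
  ring

lemma biquadForm_smul_smul (A : ι → ι → κ → κ → ℝ) (x : ι → ℝ) (y : κ → ℝ) (c d : ℝ) :
    biquadForm A (c • x) (d • y) = (c ^ 2 * d ^ 2) * biquadForm A x y := by
  simp only [biquadForm, Pi.smul_apply, smul_eq_mul, mul_sum]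
  refine sum_congr rfl fun i _ => sum_congr rfl fun j _ => sum_congr rfl fun k _ =>
    sum_congr rfl fun l _ => ?_
  ring

lemma biquadForm_zero_left (A : ι → ι → κ → κ → ℝ) (y : κ → ℝ) : biquadForm A 0 y = 0 := by
  simp [biquadForm]

lemma biquadForm_zero_right (A : ι → ι → κ → κ → ℝ) (x : ι → ℝ) : biquadForm A x 0 = 0 := by
  simp [biquadForm]

lemma inv_sum_smul_mem_stdSimplex {x : ι → ℝ} (hx : ∀ i, 0 ≤ x i) (hsum : ∑ i, x i ≠ 0) :
    (∑ i, x i)⁻¹ • x ∈ stdSimplex ℝ ι :=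
  ⟨fun i => smul_nonneg (inv_nonneg.2 (sum_nonneg fun i _ => hx i)) (hx i), by
    simp only [Pi.smul_apply, smul_eq_mul, ← mul_sum, inv_mul_cancel₀ hsum]⟩

lemma biquadForm_nonneg_of_nonneg_on_stdSimplex {B : ι → ι → κ → κ → ℝ}
    (hB : ∀ x ∈ stdSimplex ℝ ι, ∀ y ∈ stdSimplex ℝ κ, 0 ≤ biquadForm B x y)
    {x : ι → ℝ} {y : κ → ℝ} (hx : ∀ i, 0 ≤ x i) (hy : ∀ k, 0 ≤ y k) :
    0 ≤ biquadForm B x y := by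
  by_cases hsx : ∑ i, x i = 0
  · rw [(Fintype.sum_eq_zero_iff_of_nonneg hx).1 hsx, biquadForm_zero_left]
  by_cases hsy : ∑ k, y k = 0
  · rw [(Fintype.sum_eq_zero_iff_of_nonneg hy).1 hsy, biquadForm_zero_right]
  have hscale : biquadForm B x y = ((∑ i, x i) ^ 2 * (∑ k, y k) ^ 2) *
      biquadForm B ((∑ i, x i)⁻¹ • x) ((∑ k, y k)⁻¹ • y) := by
    rw [biquadForm_smul_smul, ← mul_assoc]
    field_simp
  rw [hscale]
  exact mul_nonneg (by positivity)
    (hB _ (inv_sum_smul_mem_stdSimplex hx hsx) _ (inv_sum_smul_mem_stdSimplex hy hsy))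

lemma tensorPairing_nonneg_of_mem_cpCone {B Z : ι → ι → κ → κ → ℝ}
    (hB : ∀ x ∈ stdSimplex ℝ ι, ∀ y ∈ stdSimplex ℝ κ, 0 ≤ biquadForm B x y)
    (hZ : Z ∈ cpCone ι κ) : 0 ≤ tensorPairing B Z := by
  refine convexHull_min ?_ (convex_halfSpace_ge (tensorPairing B).isLinear 0) hZ
  rintro _ ⟨x, y, hx, hy, rfl⟩
  rw [Set.mem_ofPred_eq, tensorPairing_rankOneTensor]
  exact biquadForm_nonneg_of_nonneg_on_stdSimplex hB hx hy

lemma exists_forall_biquadForm_le [Nonempty ι] [Nonempty κ] (A : ι → ι → κ → κ → ℝ) :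
    ∃ x₀ ∈ stdSimplex ℝ ι, ∃ y₀ ∈ stdSimplex ℝ κ,
      ∀ x ∈ stdSimplex ℝ ι, ∀ y ∈ stdSimplex ℝ κ, biquadForm A x₀ y₀ ≤ biquadForm A x y := by
  classical
  obtain ⟨⟨x₀, y₀⟩, ⟨hx₀, hy₀⟩, hmin⟩ :=
    ((isCompact_stdSimplex ℝ ι).prod (isCompact_stdSimplex ℝ κ)).exists_isMinOn
      ⟨(Pi.single (Classical.arbitrary ι) 1, Pi.single (Classical.arbitrary κ) 1),
        single_mem_stdSimplex ℝ _, single_mem_stdSimplex ℝ _⟩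
      (f := fun p : (ι → ℝ) × (κ → ℝ) => biquadForm A p.1 p.2)
      (Continuous.continuousOn (by simp only [biquadForm]; fun_prop))
  exact ⟨x₀, hx₀, y₀, hy₀, fun x hx y hy => isMinOn_iff.1 hmin (x, y) ⟨hx, hy⟩⟩

lemma isLeast_tensorPairing_cpCone {A : ι → ι → κ → κ → ℝ} {x₀ : ι → ℝ} {y₀ : κ → ℝ}
    (hx₀ : x₀ ∈ stdSimplex ℝ ι) (hy₀ : y₀ ∈ stdSimplex ℝ κ)
    (hmin : ∀ x ∈ stdSimplex ℝ ι, ∀ y ∈ stdSimplex ℝ κ, biquadForm A x₀ y₀ ≤ biquadForm A x y) :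
    IsLeast {v | ∃ Z ∈ cpCone ι κ, (∑ i, ∑ j, ∑ k, ∑ l, Z i j k l) = 1 ∧ v = tensorPairing A Z}
      (biquadForm A x₀ y₀) := by
  refine ⟨⟨rankOneTensor x₀ y₀, subset_convexHull ℝ _ ⟨x₀, y₀, hx₀.1, hy₀.1, rfl⟩, ?_, ?_⟩, ?_⟩
  · rw [← tensorPairing_one, tensorPairing_rankOneTensor, biquadForm_one, hx₀.2, hy₀.2]
    norm_num
  · rw [tensorPairing_rankOneTensor]
  · rintro _ ⟨Z, hZ, hEZ, rfl⟩
    have hB : ∀ x ∈ stdSimplex ℝ ι, ∀ y ∈ stdSimplex ℝ κ,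
        0 ≤ biquadForm (A - biquadForm A x₀ y₀ • 1) x y := by
      intro x hx y hy
      rw [← tensorPairing_rankOneTensor, tensorPairing_sub_smul_one,
        tensorPairing_rankOneTensor, tensorPairing_rankOneTensor, biquadForm_one, hx.2, hy.2]
      linarith [hmin x hx y hy]
    have := tensorPairing_nonneg_of_mem_cpCone hB hZ
    rw [tensorPairing_sub_smul_one, tensorPairing_one, hEZ] at this
    linarith

theorem conic_relaxation_exact_general (n m : ℕ) (hn : 0 < n) (hm : 0 < m)
    (A : Fin n → Fin n → Fin m → Fin m → ℝ) :
    IsLeast {v : ℝ | ∃ Z ∈ convexHull ℝ {T : Fin n → Fin n → Fin m → Fin m → ℝ |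
        ∃ (x : Fin n → ℝ) (y : Fin m → ℝ), (∀ i, 0 ≤ x i) ∧ (∀ k, 0 ≤ y k) ∧
          T = fun i j k l => x i * x j * y k * y l},
        (∑ i, ∑ j, ∑ k, ∑ l, Z i j k l) = 1 ∧
        v = ∑ i, ∑ j, ∑ k, ∑ l, A i j k l * Z i j k l}
      (sInf {v : ℝ | ∃ x ∈ stdSimplex ℝ (Fin n), ∃ y ∈ stdSimplex ℝ (Fin m),
        v = ∑ i, ∑ j, ∑ k, ∑ l, A i j k l * x i * x j * y k * y l}) := by
  have : Nonempty (Fin n) := ⟨⟨0, hn⟩⟩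
  have : Nonempty (Fin m) := ⟨⟨0, hm⟩⟩
  obtain ⟨x₀, hx₀, y₀, hy₀, hmin⟩ := exists_forall_biquadForm_le A
  have hpmin : sInf {v : ℝ | ∃ x ∈ stdSimplex ℝ (Fin n), ∃ y ∈ stdSimplex ℝ (Fin m),
      v = biquadForm A x y} = biquadForm A x₀ y₀ :=
    IsLeast.csInf_eq ⟨⟨x₀, hx₀, y₀, hy₀, rfl⟩, by
      rintro _ ⟨x, hx, y, hy, rfl⟩
      exact hmin x hx y hy⟩
  have hconic := isLeast_tensorPairing_cpCone hx₀ hy₀ hmin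
  rw [← hpmin] at hconic
  exact hconic

/-- The conic program `min{ A • Z : Z ∈ B_{n,m}, E • Z = 1 }` attains
its infimum, and the optimal value equals `p_A^min`, the minimum of the bi-quadratic
form `p_A` over `Δ_n × Δ_m`. -/
theorem conic_relaxation_exact (n m : ℕ) (hn : 0 < n) (hm : 0 < m)
    (A : Fin n → Fin n → Fin m → Fin m → ℝ)
    (hsym : ∀ i j k l, A i j k l = A j i k l ∧ A j i k l = A j i l k) :
    IsLeast {v : ℝ | ∃ Z ∈ convexHull ℝ {T : Fin n → Fin n → Fin m → Fin m → ℝ |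
        ∃ (x : Fin n → ℝ) (y : Fin m → ℝ), (∀ i, 0 ≤ x i) ∧ (∀ k, 0 ≤ y k) ∧
          T = fun i j k l => x i * x j * y k * y l},
        (∑ i, ∑ j, ∑ k, ∑ l, Z i j k l) = 1 ∧
        v = ∑ i, ∑ j, ∑ k, ∑ l, A i j k l * Z i j k l}
      (sInf {v : ℝ | ∃ x ∈ stdSimplex ℝ (Fin n), ∃ y ∈ stdSimplex ℝ (Fin m),
        v = ∑ i, ∑ j, ∑ k, ∑ l, A i j k l * x i * x j * y k * y l}) :=
  conic_relaxation_exact_general n m hn hm A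
end

section
/- Let A = (a_{ijkl}) be a partially symmetric (2,2)-th order n×n×m×m tensor and suppose the bi-quadratic form p_A is positive on Δ_n × Δ_m, i.e., p_A(x,y) > 0 for all (x,y) ∈ Δ_n × Δ_m. Then there exist natural numbers R and S such that for all integers r ≥ R and s ≥ S, the polynomial p_A(x,y) (Σ_{i=1}^n x_i)^r (Σ_{j=1}^m y_j)^s, viewed as a polynomial in the variables x_1,…,x_n, y_1,…,y_m, has only nonnegative coefficients. -/
/-!
Pólya's argument. On the monomial `x^α` the operator `X_i X_j ∂_i ∂_j` acts as multiplication
by `α_i (α_j - δ_ij)`, while `∂_i ∂_j (Σ x)^(r+2) = (r+2)(r+1) (Σ x)^r`. Hence the coefficient of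
`x^α y^β` in `p_A (Σ x)^r (Σ y)^s` is a nonnegative multiple of the perturbed form
`Σ A_ijkl x_i (x_j - t δ_ij) y_k (y_l - u δ_kl)` at `x = α/(r+2)`, `y = β/(s+2)`, `t = 1/(r+2)`,
`u = 1/(s+2)`, and it vanishes unless `|α| = r+2` and `|β| = s+2`, i.e. unless `(x, y) ∈ Δ_n × Δ_m`.
The perturbed form is continuous in `(t, u, x, y)` and positive for `t = u = 0` on the compact set
`Δ_n × Δ_m`, so it stays positive there for all small `t, u`.
-/

open MvPolynomial

/-- The bi-quadratic form `p_A` as a polynomial in the variables `x_1,…,x_n,y_1,…,y_m`. -/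
noncomputable def biQuadPoly {n m : ℕ} (A : Fin n → Fin n → Fin m → Fin m → ℝ) :
    MvPolynomial (Fin n ⊕ Fin m) ℝ :=
  ∑ i, ∑ j, ∑ k, ∑ l, C (A i j k l) *
    X (Sum.inl i) * X (Sum.inl j) * X (Sum.inr k) * X (Sum.inr l)

open Finset Filter Topology

namespace MvPolynomial

variable {R σ τ : Type*} [CommSemiring R]

theorem coeff_rename_inl_mul_rename_inr (p : MvPolynomial σ R) (q : MvPolynomial τ R)
    (μ : σ ⊕ τ →₀ ℕ) :
    coeff μ (rename Sum.inl p * rename Sum.inr q) =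
      coeff (Finsupp.sumFinsuppEquivProdFinsupp μ).1 p *
        coeff (Finsupp.sumFinsuppEquivProdFinsupp μ).2 q := by
  classical
  induction p using MvPolynomial.induction_on' with
  | add p p' hp hp' => simp [add_mul, hp, hp']
  | monomial a c =>
    induction q using MvPolynomial.induction_on' with
    | add q q' hq hq' => simp [mul_add, hq, hq']
    | monomial b d =>
      have hsplit : a.sumElim b = μ ↔
          a = (Finsupp.sumFinsuppEquivProdFinsupp μ).1 ∧
            b = (Finsupp.sumFinsuppEquivProdFinsupp μ).2 := by
        rw [← Prod.mk.injEq, ← Equiv.symm_apply_eq]; rfl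
      rw [rename_monomial, rename_monomial, monomial_mul, ← Finsupp.sumElim_eq_add,
        coeff_monomial, coeff_monomial, coeff_monomial, ite_zero_mul_ite_zero]
      exact if_congr hsplit rfl rfl

theorem coeff_X_mul_pderiv (i : σ) (p : MvPolynomial σ R) (m : σ →₀ ℕ) :
    coeff m (X i * pderiv i p) = m i * coeff m p := by
  classical
  induction p using MvPolynomial.induction_on' with
  | add p q hp hq => simp [mul_add, hp, hq]
  | monomial n a =>
    rw [X_mul_pderiv_monomial, coeff_smul, coeff_monomial]
    split_ifs with h <;> simp [h]

theorem pderiv_sum_X [Fintype σ] (i : σ) : pderiv i (∑ k, X k : MvPolynomial σ R) = 1 := by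
  classical
  simp [map_sum, pderiv_X]

theorem pderiv_sum_X_pow [Fintype σ] (i : σ) (r : ℕ) :
    pderiv i ((∑ k, X k : MvPolynomial σ R) ^ (r + 1)) = (r + 1) • (∑ k, X k) ^ r := by
  rw [pderiv_pow, pderiv_sum_X, nsmul_eq_mul]; simp

section CommRing

variable {R σ : Type*} [CommRing R] [DecidableEq σ]

theorem coeff_X_mul_X_mul_pderiv_pderiv (i j : σ) (p : MvPolynomial σ R) (m : σ →₀ ℕ) :
    coeff m (X i * X j * pderiv i (pderiv j p)) =
      m i * (m j - if i = j then 1 else 0) * coeff m p := by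
  by_cases h : i = j
  · subst h
    have hEuler : X i * X i * pderiv i (pderiv i p) =
        X i * pderiv i (X i * pderiv i p) - X i * pderiv i p := by
      rw [pderiv_mul, pderiv_X_self]; ring
    rw [hEuler, coeff_sub, coeff_X_mul_pderiv, coeff_X_mul_pderiv, if_pos rfl]
    ring
  · have hEuler : X i * X j * pderiv i (pderiv j p) = X i * pderiv i (X j * pderiv j p) := by
      rw [pderiv_mul, pderiv_X_of_ne (Ne.symm h)]; ring
    rw [hEuler, coeff_X_mul_pderiv, coeff_X_mul_pderiv, if_neg h, sub_zero, mul_assoc]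

theorem coeff_X_mul_X_mul_sum_X_pow [Fintype σ] (α : σ →₀ ℕ) (i j : σ) (r : ℕ) :
    ((r + 2) * (r + 1) : R) * coeff α (X i * X j * (∑ k, X k) ^ r) =
      α i * (α j - if i = j then 1 else 0) * coeff α ((∑ k, X k) ^ (r + 2)) := by
  rw [← coeff_X_mul_X_mul_pderiv_pderiv, pderiv_sum_X_pow, map_nsmul, pderiv_sum_X_pow,
    mul_smul_comm, mul_smul_comm, coeff_smul, coeff_smul]
  ring

theorem coeff_X_mul_X_mul_sum_X_pow_eq [Fintype σ] (α : σ →₀ ℕ) (i j : σ) (r : ℕ) :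
    coeff α (X i * X j * (∑ k, X k) ^ r : MvPolynomial σ ℝ) =
      (r + 2) / (r + 1) * coeff α ((∑ k, X k) ^ (r + 2)) *
        ((α i / (r + 2)) * (α j / (r + 2) - if i = j then (r + 2 : ℝ)⁻¹ else 0)) := by
  have h := coeff_X_mul_X_mul_sum_X_pow (R := ℝ) α i j r
  split_ifs at h ⊢ <;> field_simp <;> linear_combination h

end CommRing

section Nonneg

variable {R σ : Type*} [CommSemiring R] [Fintype σ]

theorem coeff_sum_X_pow_nonneg [PartialOrder R] [IsOrderedRing R] (α : σ →₀ ℕ) (N : ℕ) :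
    0 ≤ coeff α ((∑ k, X k : MvPolynomial σ R) ^ N) := by
  have : (∑ k, X k : MvPolynomial σ R) ^ N = map (Nat.castRingHom R) ((∑ k, X k) ^ N) := by
    simp [map_sum]
  rw [this, coeff_map]
  exact Nat.cast_nonneg _

theorem coeff_sum_X_pow_eq_zero {α : σ →₀ ℕ} {N : ℕ} (h : α.degree ≠ N) :
    coeff α ((∑ k, X k : MvPolynomial σ R) ^ N) = 0 := by
  have hom : IsHomogeneous (∑ k, X k : MvPolynomial σ R) 1 :=
    IsHomogeneous.sum _ _ _ fun k _ => isHomogeneous_X R k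
  exact (hom.pow N).coeff_eq_zero (by rwa [one_mul])

end Nonneg

end MvPolynomial

theorem natCast_div_mem_stdSimplex {σ : Type*} [Fintype σ] {α : σ →₀ ℕ} {N : ℕ}
    (h : α.degree = N) (hN : N ≠ 0) : (fun k => (α k : ℝ) / N) ∈ stdSimplex ℝ σ := by
  refine ⟨fun k => by positivity, ?_⟩
  rw [← Finset.sum_div, ← Nat.cast_sum, ← Finsupp.degree_eq_sum, h]
  exact div_self (Nat.cast_ne_zero.mpr hN)

section ShiftedForm

variable {ι κ : Type*} [Fintype ι] [Fintype κ] [DecidableEq ι] [DecidableEq κ]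
  (A : ι → ι → κ → κ → ℝ)

noncomputable def shiftedBiQuadForm (t u : ℝ) (x : ι → ℝ) (y : κ → ℝ) : ℝ :=
  ∑ i, ∑ j, ∑ k, ∑ l, A i j k l * (x i * (x j - if i = j then t else 0)) *
    (y k * (y l - if k = l then u else 0))

theorem shiftedBiQuadForm_zero_zero (x : ι → ℝ) (y : κ → ℝ) :
    shiftedBiQuadForm A 0 0 x y = ∑ i, ∑ j, ∑ k, ∑ l, A i j k l * x i * x j * y k * y l := by
  simp only [shiftedBiQuadForm, ite_self, sub_zero, mul_assoc]

theorem continuous_shiftedBiQuadForm :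
    Continuous fun p : (ℝ × ℝ) × (ι → ℝ) × (κ → ℝ) =>
      shiftedBiQuadForm A p.1.1 p.1.2 p.2.1 p.2.2 := by
  refine continuous_finsetSum _ fun i _ => continuous_finsetSum _ fun j _ =>
    continuous_finsetSum _ fun k _ => continuous_finsetSum _ fun l _ => ?_
  split_ifs <;> fun_prop

theorem eventually_shiftedBiQuadForm_pos
    (hpos : ∀ x ∈ stdSimplex ℝ ι, ∀ y ∈ stdSimplex ℝ κ, 0 < shiftedBiQuadForm A 0 0 x y) :
    ∀ᶠ tu in 𝓝 (0 : ℝ) ×ˢ 𝓝 (0 : ℝ), ∀ xy ∈ stdSimplex ℝ ι ×ˢ stdSimplex ℝ κ,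
      0 < shiftedBiQuadForm A tu.1 tu.2 xy.1 xy.2 := by
  rw [← nhds_prod_eq]
  have hK := (isCompact_stdSimplex ℝ ι).prod (isCompact_stdSimplex ℝ κ)
  exact hK.eventually_forall_of_forall_eventually fun xy hxy =>
    (continuous_shiftedBiQuadForm A).continuousAt.eventually (lt_mem_nhds (hpos _ hxy.1 _ hxy.2))

theorem exists_forall_shiftedBiQuadForm_inv_pos
    (hpos : ∀ x ∈ stdSimplex ℝ ι, ∀ y ∈ stdSimplex ℝ κ, 0 < shiftedBiQuadForm A 0 0 x y) :
    ∃ R S : ℕ, ∀ r s : ℕ, R ≤ r → S ≤ s → ∀ x ∈ stdSimplex ℝ ι, ∀ y ∈ stdSimplex ℝ κ,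
      0 < shiftedBiQuadForm A ((r : ℝ) + 2)⁻¹ ((s : ℝ) + 2)⁻¹ x y := by
  obtain ⟨P, hP, Q, hQ, hPQ⟩ := eventually_prod_iff.mp (eventually_shiftedBiQuadForm_pos A hpos)
  have hinv : Tendsto (fun r : ℕ => ((r : ℝ) + 2)⁻¹) atTop (𝓝 0) :=
    tendsto_inv_atTop_zero.comp (tendsto_atTop_add_const_right _ _ tendsto_natCast_atTop_atTop)
  obtain ⟨R, hR⟩ := eventually_atTop.mp (hinv.eventually hP)
  obtain ⟨S, hS⟩ := eventually_atTop.mp (hinv.eventually hQ)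
  exact ⟨R, S, fun r s hr hs x hx y hy => hPQ (hR r hr) (hS s hs) (x, y) ⟨hx, hy⟩⟩

end ShiftedForm

section BiQuadratic

variable {n m : ℕ} (A : Fin n → Fin n → Fin m → Fin m → ℝ)

theorem coeff_biQuadPoly_mul_sum_X_pow_mul_sum_X_pow (r s : ℕ) (μ : Fin n ⊕ Fin m →₀ ℕ) :
    coeff μ (biQuadPoly A * (∑ i, X (Sum.inl i)) ^ r * (∑ k, X (Sum.inr k)) ^ s) =
      ∑ i, ∑ j, ∑ k, ∑ l, A i j k l *
        coeff (Finsupp.sumFinsuppEquivProdFinsupp μ).1 (X i * X j * (∑ i, X i) ^ r) *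
        coeff (Finsupp.sumFinsuppEquivProdFinsupp μ).2 (X k * X l * (∑ k, X k) ^ s) := by
  have hsplit : biQuadPoly A * (∑ i, X (Sum.inl i)) ^ r * (∑ k, X (Sum.inr k)) ^ s =
      ∑ i, ∑ j, ∑ k, ∑ l, C (A i j k l) *
        (rename Sum.inl (X i * X j * (∑ i, X i) ^ r) *
          rename Sum.inr (X k * X l * (∑ k, X k) ^ s)) := by
    simp only [biQuadPoly, map_mul, map_pow, map_sum, rename_X, Finset.sum_mul]
    refine sum_congr rfl fun i _ => sum_congr rfl fun j _ =>
      sum_congr rfl fun k _ => sum_congr rfl fun l _ => ?_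
    ring
  simp only [hsplit, coeff_sum, coeff_C_mul, coeff_rename_inl_mul_rename_inr, mul_assoc]

theorem coeff_biQuadPoly_mul_sum_X_pow_mul_sum_X_pow_eq (r s : ℕ) (μ : Fin n ⊕ Fin m →₀ ℕ) :
    let α := (Finsupp.sumFinsuppEquivProdFinsupp μ).1
    let β := (Finsupp.sumFinsuppEquivProdFinsupp μ).2
    coeff μ (biQuadPoly A * (∑ i, X (Sum.inl i)) ^ r * (∑ k, X (Sum.inr k)) ^ s) =
      (r + 2) / (r + 1) * coeff α ((∑ i, X i) ^ (r + 2)) *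
        ((s + 2) / (s + 1) * coeff β ((∑ k, X k) ^ (s + 2))) *
        shiftedBiQuadForm A ((r : ℝ) + 2)⁻¹ ((s : ℝ) + 2)⁻¹
          (fun i => α i / (r + 2)) (fun k => β k / (s + 2)) := by
  intro α β
  rw [coeff_biQuadPoly_mul_sum_X_pow_mul_sum_X_pow, shiftedBiQuadForm]
  simp only [coeff_X_mul_X_mul_sum_X_pow_eq, mul_sum]
  refine sum_congr rfl fun i _ => sum_congr rfl fun j _ =>
    sum_congr rfl fun k _ => sum_congr rfl fun l _ => ?_
  ring

end BiQuadratic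

theorem polya_biquadratic_general (n m : ℕ)
    (A : Fin n → Fin n → Fin m → Fin m → ℝ)
    (hpos : ∀ x ∈ stdSimplex ℝ (Fin n), ∀ y ∈ stdSimplex ℝ (Fin m),
      0 < ∑ i, ∑ j, ∑ k, ∑ l, A i j k l * x i * x j * y k * y l) :
    ∃ R S : ℕ, ∀ r s : ℕ, R ≤ r → S ≤ s → ∀ μ : (Fin n ⊕ Fin m) →₀ ℕ,
      0 ≤ (biQuadPoly A * (∑ i, X (Sum.inl i)) ^ r *
        (∑ j : Fin m, X (Sum.inr j)) ^ s).coeff μ := by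
  obtain ⟨R, S, hRS⟩ := exists_forall_shiftedBiQuadForm_inv_pos A
    (by simpa only [shiftedBiQuadForm_zero_zero] using hpos)
  refine ⟨R, S, fun r s hr hs μ => ?_⟩
  rw [coeff_biQuadPoly_mul_sum_X_pow_mul_sum_X_pow_eq]
  set α := (Finsupp.sumFinsuppEquivProdFinsupp μ).1
  set β := (Finsupp.sumFinsuppEquivProdFinsupp μ).2
  by_cases hdeg : α.degree = r + 2 ∧ β.degree = s + 2
  · have hx := natCast_div_mem_stdSimplex hdeg.1 (by omega)
    have hy := natCast_div_mem_stdSimplex hdeg.2 (by omega)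
    push_cast at hx hy
    have hc := coeff_sum_X_pow_nonneg (R := ℝ) α (r + 2)
    have hd := coeff_sum_X_pow_nonneg (R := ℝ) β (s + 2)
    exact mul_nonneg (by positivity) (hRS r s hr hs _ hx _ hy).le
  · rcases not_and_or.mp hdeg with h | h <;> simp [coeff_sum_X_pow_eq_zero h]

/-- **Pólya-type theorem.** If the bi-quadratic form `p_A` of a partially
symmetric tensor `A` is positive on `Δ_n × Δ_m`, then for all sufficiently large `r` and `s`
the polynomial `p_A(x,y)·(Σ_i x_i)^r·(Σ_j y_j)^s` has only nonnegative coefficients. -/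
theorem polya_biquadratic (n m : ℕ) (hn : 0 < n) (hm : 0 < m)
    (A : Fin n → Fin n → Fin m → Fin m → ℝ)
    (hsym : ∀ i j k l, A i j k l = A j i k l ∧ A j i k l = A j i l k)
    (hpos : ∀ x ∈ stdSimplex ℝ (Fin n), ∀ y ∈ stdSimplex ℝ (Fin m),
      0 < ∑ i, ∑ j, ∑ k, ∑ l, A i j k l * x i * x j * y k * y l) :
    ∃ R S : ℕ, ∀ r s : ℕ, R ≤ r → S ≤ s → ∀ μ : (Fin n ⊕ Fin m) →₀ ℕ,
      0 ≤ (biQuadPoly A * (∑ i, X (Sum.inl i)) ^ r *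
        (∑ j : Fin m, X (Sum.inr j)) ^ s).coeff μ :=
  polya_biquadratic_general n m A hpos
end

section
/- Let G = (g_{ijkl}) be a partially symmetric (2,2)-th order n×n×m×m tensor, let s, r be nonnegative integers, and let ξ ∈ I(n,s+2), ζ ∈ I(m,r+2). Then Q̄_{ξζ}(G) = [c(ξ)c(ζ) / ((s+2)(s+1)(r+2)(r+1))] · ( Σ_{i,j=1}^n Σ_{k,l=1}^m g_{ijkl} ξ_i ξ_j ζ_k ζ_l − Σ_{i=1}^n ξ_i (Σ_{k,l=1}^m g_{iikl} ζ_k ζ_l) − Σ_{k=1}^m ζ_k (Σ_{i,j=1}^n g_{ijkk} ξ_i ξ_j) + Σ_{i=1}^n Σ_{k=1}^m g_{iikk} ξ_i ζ_k ). -/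
/-!
Removing a unit from coordinate `i` rescales the coefficient: `c(α - e_i) |α| = c(α) α_i` for every
integer vector `α` (both sides vanish once `α - e_i` leaves the nonnegative orthant). Applied twice,
`c(ξ - e_i - e_j) (s + 2)(s + 1) = c(ξ) ξ_i (ξ_j - δ_ij)`, and expanding the product of the two
such factors against `G` produces the four sums.
-/

/-- The multinomial-type coefficient `c(α) = |α|!/(α_1!⋯α_n!)` for `α ∈ ℤ^n` with all
entries nonnegative, and `c(α) = 0` otherwise. -/
noncomputable def multCoeff {n : ℕ} (α : Fin n → ℤ) : ℝ :=
  if ∀ i, 0 ≤ α i then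
    ((∑ i, (α i).toNat).factorial : ℝ) / ∏ i, ((α i).toNat.factorial : ℝ)
  else 0

/-- `Q̄_{ξζ}(G) = Σ_{i,j,k,l} g_{ijkl} c(ξ − e_i − e_j) c(ζ − e_k − e_l)`. -/
noncomputable def Qbar {n m : ℕ} (G : Fin n → Fin n → Fin m → Fin m → ℝ)
    (ξ : Fin n → ℕ) (ζ : Fin m → ℕ) : ℝ :=
  ∑ i, ∑ j, ∑ k, ∑ l, G i j k l *
    multCoeff (fun a => (ξ a : ℤ) - (if a = i then 1 else 0) - (if a = j then 1 else 0)) *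
    multCoeff (fun b => (ζ b : ℤ) - (if b = k then 1 else 0) - (if b = l then 1 else 0))

open Finset Nat

theorem prod_factorial_add_ite {ι : Type*} [Fintype ι] [DecidableEq ι] (β : ι → ℕ) (i : ι) :
    ∏ a, (β a + if a = i then 1 else 0)! = (β i + 1) * ∏ a, (β a)! := by
  have h : ∀ a, (β a + if a = i then 1 else 0)! = (β a)! * if a = i then β a + 1 else 1 := by
    intro a
    split_ifs
    · rw [factorial_succ, mul_comm]
    · simp
  simp only [h, prod_mul_distrib, prod_ite_eq', mem_univ, if_true]
  ring

section multCoeff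

variable {n : ℕ}

theorem multCoeff_natCast (β : Fin n → ℕ) :
    multCoeff (fun a => (β a : ℤ)) = ((∑ a, β a)! : ℝ) / ∏ a, ((β a)! : ℝ) := by
  simp [multCoeff]

theorem multCoeff_natCast_mul_sum_add_one (β : Fin n → ℕ) (i : Fin n) :
    multCoeff (fun a => (β a : ℤ)) * ((∑ a, β a : ℕ) + 1 : ℝ) =
      multCoeff (fun a => ((β a + if a = i then 1 else 0 : ℕ) : ℤ)) * ((β i : ℝ) + 1) := by
  have hsum : ∑ a, (β a + if a = i then 1 else 0) = ∑ a, β a + 1 := by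
    simp [sum_add_distrib]
  have hprod := congrArg (Nat.cast : ℕ → ℝ) (prod_factorial_add_ite β i)
  push_cast at hprod
  rw [multCoeff_natCast, multCoeff_natCast, hsum, hprod, factorial_succ]
  have : ∏ a, ((β a)! : ℝ) ≠ 0 := prod_ne_zero_iff.2 fun a _ => by positivity
  field_simp
  push_cast
  ring

theorem multCoeff_sub_single_mul_sum (α : Fin n → ℤ) (i : Fin n) :
    multCoeff (fun a => α a - if a = i then 1 else 0) * ((∑ a, α a : ℤ) : ℝ) =
      multCoeff α * (α i : ℝ) := by
  by_cases h : ∀ a, 0 ≤ α a - if a = i then 1 else 0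
  · set β : Fin n → ℕ := fun a => (α a - if a = i then 1 else 0).toNat
    have hβ : (fun a => α a - if a = i then 1 else 0) = fun a => (β a : ℤ) := by
      funext a; exact (Int.toNat_of_nonneg (h a)).symm
    have hα : α = fun a => ((β a + if a = i then 1 else 0 : ℕ) : ℤ) := by
      funext a; have := h a; simp only [β]; split_ifs <;> push_cast <;> omega
    have hsum : ((∑ a, α a : ℤ) : ℝ) = ((∑ a, β a : ℕ) + 1 : ℝ) := by
      rw [hα]; push_cast [sum_add_distrib]; simp
    have hi : (α i : ℝ) = (β i : ℝ) + 1 := by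
      rw [hα]; simp
    rw [hβ, hsum, hi, multCoeff_natCast_mul_sum_add_one, ← hα]
  · have hlhs : multCoeff (fun a => α a - if a = i then 1 else 0) = 0 := if_neg h
    obtain ⟨a, ha⟩ := not_forall.1 h
    rcases lt_or_ge (α a) 0 with hneg | hnonneg
    · have hα : multCoeff α = 0 := if_neg fun h' => (h' a).not_gt hneg
      rw [hlhs, hα, zero_mul, zero_mul]
    · obtain rfl : a = i := by by_contra hai; simp [hai] at ha; omega
      have hαa : α a = 0 := by simp at ha; omega
      rw [hlhs, hαa]; simp

theorem multCoeff_sub_single_sub_single_mul (α : Fin n → ℤ) (i j : Fin n) :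
    multCoeff (fun a => α a - (if a = i then 1 else 0) - (if a = j then 1 else 0)) *
        (((∑ a, α a : ℤ) : ℝ) - 1) * ((∑ a, α a : ℤ) : ℝ) =
      multCoeff α * ((α i : ℝ) * ((α j : ℝ) - if j = i then 1 else 0)) := by
  have hsum : ∑ a, (α a - if a = i then 1 else 0) = ∑ a, α a - 1 := by
    simp [sum_sub_distrib]
  have h₁ := multCoeff_sub_single_mul_sum (fun a => α a - if a = i then 1 else 0) j
  have h₂ := multCoeff_sub_single_mul_sum α i
  rw [hsum] at h₁
  push_cast at h₁ h₂ ⊢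
  rw [h₁, mul_right_comm, h₂]
  split_ifs <;> ring

theorem multCoeff_natCast_sub_single_sub_single {s : ℕ} {ξ : Fin n → ℕ} (hξ : ∑ a, ξ a = s + 2)
    (i j : Fin n) :
    multCoeff (fun a => (ξ a : ℤ) - (if a = i then 1 else 0) - (if a = j then 1 else 0)) =
      multCoeff (fun a => (ξ a : ℤ)) * ((ξ i : ℝ) * ((ξ j : ℝ) - if j = i then 1 else 0)) /
        (((s : ℝ) + 2) * ((s : ℝ) + 1)) := by
  have h := multCoeff_sub_single_sub_single_mul (fun a => (ξ a : ℤ)) i j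
  have hcast : ((∑ a, (ξ a : ℤ) : ℤ) : ℝ) = (s : ℝ) + 2 := by exact_mod_cast hξ
  rw [hcast] at h
  push_cast at h
  rw [eq_div_iff (by positivity), ← h]
  ring

end multCoeff

theorem sum_mul_sub_ite_mul_sub_ite {ι κ R : Type*} [Fintype ι] [Fintype κ] [DecidableEq ι]
    [DecidableEq κ] [CommRing R] (G : ι → ι → κ → κ → R) (x : ι → R) (y : κ → R) :
    ∑ i, ∑ j, ∑ k, ∑ l,
        G i j k l * (x i * (x j - if j = i then 1 else 0)) * (y k * (y l - if l = k then 1 else 0)) =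
      (∑ i, ∑ j, ∑ k, ∑ l, G i j k l * x i * x j * y k * y l)
        - (∑ i, x i * ∑ k, ∑ l, G i i k l * y k * y l)
        - (∑ k, y k * ∑ i, ∑ j, G i j k k * x i * x j)
        + ∑ i, ∑ k, G i i k k * x i * y k := by
  have hterm : ∀ i j k l, G i j k l * (x i * (x j - if j = i then 1 else 0)) *
      (y k * (y l - if l = k then 1 else 0)) =
      G i j k l * x i * x j * y k * y l
        - (if j = i then x i * (G i j k l * y k * y l) else 0)
        - (if l = k then y k * (G i j k l * x i * x j) else 0)
        + (if j = i then (if l = k then G i j k l * x i * y k else 0) else 0) := by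
    intro i j k l
    split_ifs <;> ring
  simp only [hterm, sum_add_distrib, sum_sub_distrib, sum_ite_irrel, sum_const_zero, sum_ite_eq',
    mem_univ, if_true, mul_sum]
  congr 2
  exact (sum_congr rfl fun _ _ => sum_comm).trans sum_comm

theorem Qbar_formula_general (n m : ℕ) (s r : ℕ)
    (G : Fin n → Fin n → Fin m → Fin m → ℝ)
    (ξ : Fin n → ℕ) (hξ : ∑ i, ξ i = s + 2)
    (ζ : Fin m → ℕ) (hζ : ∑ k, ζ k = r + 2) :
    Qbar G ξ ζ =
      multCoeff (fun a => (ξ a : ℤ)) * multCoeff (fun b => (ζ b : ℤ)) /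
          (((s : ℝ) + 2) * ((s : ℝ) + 1) * ((r : ℝ) + 2) * ((r : ℝ) + 1)) *
        ((∑ i, ∑ j, ∑ k, ∑ l, G i j k l * (ξ i : ℝ) * (ξ j : ℝ) * (ζ k : ℝ) * (ζ l : ℝ))
          - (∑ i, (ξ i : ℝ) * ∑ k, ∑ l, G i i k l * (ζ k : ℝ) * (ζ l : ℝ))
          - (∑ k, (ζ k : ℝ) * ∑ i, ∑ j, G i j k k * (ξ i : ℝ) * (ξ j : ℝ))
          + ∑ i, ∑ k, G i i k k * (ξ i : ℝ) * (ζ k : ℝ)) := by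
  rw [← sum_mul_sub_ite_mul_sub_ite, Qbar]
  simp only [multCoeff_natCast_sub_single_sub_single hξ, multCoeff_natCast_sub_single_sub_single hζ,
    mul_sum]
  refine sum_congr rfl fun i _ => sum_congr rfl fun j _ => sum_congr rfl fun k _ =>
    sum_congr rfl fun l _ => ?_
  field_simp

/-- **Lemma 1.** Closed formula for `Q̄_{ξζ}(G)` when `G` is partially
symmetric, `ξ ∈ I(n,s+2)` and `ζ ∈ I(m,r+2)`. -/
theorem Qbar_formula (n m : ℕ) (hn : 0 < n) (hm : 0 < m) (s r : ℕ)
    (G : Fin n → Fin n → Fin m → Fin m → ℝ)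
    (hsym : ∀ i j k l, G i j k l = G j i k l ∧ G j i k l = G j i l k)
    (ξ : Fin n → ℕ) (hξ : ∑ i, ξ i = s + 2)
    (ζ : Fin m → ℕ) (hζ : ∑ k, ζ k = r + 2) :
    Qbar G ξ ζ =
      multCoeff (fun a => (ξ a : ℤ)) * multCoeff (fun b => (ζ b : ℤ)) /
          (((s : ℝ) + 2) * ((s : ℝ) + 1) * ((r : ℝ) + 2) * ((r : ℝ) + 1)) *
        ((∑ i, ∑ j, ∑ k, ∑ l, G i j k l * (ξ i : ℝ) * (ξ j : ℝ) * (ζ k : ℝ) * (ζ l : ℝ))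
          - (∑ i, (ξ i : ℝ) * ∑ k, ∑ l, G i i k l * (ζ k : ℝ) * (ζ l : ℝ))
          - (∑ k, (ζ k : ℝ) * ∑ i, ∑ j, G i j k k * (ξ i : ℝ) * (ξ j : ℝ))
          + ∑ i, ∑ k, G i i k k * (ξ i : ℝ) * (ζ k : ℝ)) :=
  Qbar_formula_general n m s r G ξ hξ ζ hζ
end

section
/- Let A be a partially symmetric multi-quadratic tensor with d blocks of sizes n_1,…,n_d, and let r_1,…,r_d be nonnegative integers. Then p_A^min − p_C^{(r_1,…,r_d)} ≤ [τ(r_1,…,r_d;d) / ∏_{i=1}^d (r_i+1)] (p_A^max − p_A^min), where p_C^{(r_1,…,r_d)} = sup{λ ∈ ℝ : A − λE ∈ C^{r_1,…,r_d}} and τ(r_1,…,r_d;d) = Σ_{ν ∈ {0,1}^d, d−|ν| odd} ∏_{k=1}^d (r_k+2)^{ν_k}. -/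
open MvPolynomial

/-- The multi-quadratic form `p_A` of a multi-quadratic tensor with `d` blocks. -/
def multiQuadForm {d : ℕ} {nn : Fin d → ℕ}
    (A : ((k : Fin d) → Fin (nn k)) → ((k : Fin d) → Fin (nn k)) → ℝ)
    (x : (k : Fin d) → Fin (nn k) → ℝ) : ℝ :=
  ∑ i : (k : Fin d) → Fin (nn k), ∑ j : (k : Fin d) → Fin (nn k),
    A i j * ∏ k, (x k (i k) * x k (j k))

/-- The polynomial `p_G(x^{(1)},…,x^{(d)}) · ∏_k (Σ_i x^{(k)}_i)^{r_k}`,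
viewed as a multivariate polynomial in all the variables `x^{(k)}_i`. -/
noncomputable def multiQuadPoly {d : ℕ} {nn : Fin d → ℕ}
    (G : ((k : Fin d) → Fin (nn k)) → ((k : Fin d) → Fin (nn k)) → ℝ)
    (r : Fin d → ℕ) : MvPolynomial ((k : Fin d) × Fin (nn k)) ℝ :=
  (∑ i : (k : Fin d) → Fin (nn k), ∑ j : (k : Fin d) → Fin (nn k),
      C (G i j) * ∏ k, (X ⟨k, i k⟩ * X ⟨k, j k⟩)) *
    ∏ k, (∑ a : Fin (nn k), X (⟨k, a⟩ : (k : Fin d) × Fin (nn k))) ^ (r k)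

/-- `τ(r_1,…,r_d; d) = Σ_{ν ∈ {0,1}^d, d−|ν| odd} ∏_k (r_k+2)^{ν_k}`,
with subsets of `{1,…,d}` playing the role of `ν ∈ {0,1}^d`. -/
def tauCoeff {d : ℕ} (r : Fin d → ℕ) : ℝ :=
  ∑ S ∈ (Finset.univ : Finset (Fin d)).powerset.filter (fun S => Odd (d - S.card)),
    ∏ k ∈ S, ((r k : ℝ) + 2)

/-!
For a monomial `x^μ` whose degree in block `k` is `r_k + 2`, the coefficient of
`p_{A-λE} · ∏_k (Σ_i x^{(k)}_i)^{r_k}` is, up to the positive factor `∏_k r_k! (r_k+2) / μ!`,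
`Σ_{i,j} (A_{ij} - λ) ∏_k ((r_k+2) z_{i_k} z_{j_k} - δ_{i_k j_k} z_{i_k})` with `z = μ/(r+2)` a
point of `Δ = Δ_{n_1} × ⋯ × Δ_{n_d}`; all other coefficients vanish. Expanding the product over
the set `S` of blocks that keep the term `(r_k+2) z z` gives `Σ_S (-1)^{d-|S|} ∏_{k∈S} (r_k+2) E_S`,
where `E_S` is an average of `p_{A-λE}` over points of `Δ` (the blocks outside `S` replaced by
random vertices drawn from `z`), so `E_S ∈ [p^min - λ, p^max - λ]`. Bounding `E_S` from below for
even and from above for odd `d - |S|` shows the sum is at least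
`(p^min - λ) ∏_k (r_k+1) - (p^max - p^min) τ`, which vanishes for
`λ = p^min - τ / ∏_k (r_k+1) · (p^max - p^min)`. So this `λ` lies in the set defining `p_C`.
-/

open Finset

theorem MvPolynomial.coeff_prod_rename_sigmaMk {ι : Type*} [Fintype ι] [DecidableEq ι]
    {α : ι → Type*} {R : Type*} [CommSemiring R] (p : ∀ k, MvPolynomial (α k) R)
    (μ : (Σ k, α k) →₀ ℕ) :
    coeff μ (∏ k, rename (Sigma.mk k) (p k)) = ∏ k, coeff (μ.split k) (p k) := by
  classical
  have hsplit : ∀ x : ∀ k, α k →₀ ℕ,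
      ∑ k, (x k).mapDomain (Sigma.mk k) = μ ↔ μ.split = x := by
    intro x
    have happly : ∀ k a, (∑ k, (x k).mapDomain (Sigma.mk k)) ⟨k, a⟩ = x k a := by
      intro k a
      rw [Finsupp.finsetSum_apply, sum_eq_single k]
      · exact Finsupp.mapDomain_apply sigma_mk_injective _ _
      · intro l _ hl
        refine Finsupp.mapDomain_of_notMem_range _ _ ?_
        rintro ⟨b, hb⟩
        exact hl (congrArg Sigma.fst hb)
      · simp
    constructor
    · rintro h
      ext k a
      rw [Finsupp.split_apply, ← h, happly]
    · rintro rfl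
      ext ⟨k, a⟩
      rw [happly, Finsupp.split_apply]
  conv_lhs => rw [show p = fun k => ∑ β ∈ (p k).support, monomial β (coeff β (p k)) by
    funext k; exact (p k).as_sum]
  simp only [map_sum, rename_monomial, prod_univ_sum, ← monomial_sum_prod, coeff_sum,
    coeff_monomial, hsplit, sum_ite_eq]
  split_ifs with h
  · rfl
  · obtain ⟨k, hk⟩ : ∃ k, μ.split k ∉ (p k).support := by simpa [Fintype.mem_piFinset] using h
    exact (prod_eq_zero (mem_univ k) (notMem_support_iff.1 hk)).symm

section PairPoly
open Nat
variable {α : Type*} [Fintype α] [DecidableEq α]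

noncomputable def pairPoly (r : ℕ) (i j : α) : MvPolynomial α ℝ := X i * X j * (∑ a, X a) ^ r

omit [DecidableEq α] in
lemma pairPoly_eq_monomial_mul (r : ℕ) (i j : α) :
    pairPoly r i j = monomial (Finsupp.single i 1 + Finsupp.single j 1) 1 * (∑ a, X a) ^ r := by
  rw [pairPoly, X, X, monomial_mul, one_mul]

lemma sum_sub_single_add_single {β : α →₀ ℕ} {i j : α}
    (he : Finsupp.single i 1 + Finsupp.single j 1 ≤ β) :
    ((β - (Finsupp.single i 1 + Finsupp.single j 1)).sum fun _ m => m) + 2 = ∑ a, β a := by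
  rw [Finsupp.sum_fintype _ _ fun _ => rfl,
    ← sum_congr rfl fun a _ => Nat.sub_add_cancel (he a), sum_add_distrib]
  simp [sum_add_distrib, Finsupp.single_apply]

theorem prod_descFactorial_single_add_single (β : α → ℕ) (i j : α) :
    (∏ a, ((β a).descFactorial ((Finsupp.single i 1 + Finsupp.single j 1 : α →₀ ℕ) a) : ℝ)) =
      β i * β j - if i = j then (β i : ℝ) else 0 := by
  by_cases hij : i = j
  · subst hij
    rw [Fintype.prod_eq_single i fun a ha => by simp [Ne.symm ha]]
    simp [Nat.cast_descFactorial_two, ← two_mul]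
    ring
  · rw [Fintype.prod_eq_mul i j hij fun a ⟨hai, haj⟩ => by
      simp [Ne.symm hai, Ne.symm haj]]
    simp [hij, Ne.symm hij]

theorem coeff_pairPoly_eq_zero {r : ℕ} {β : α →₀ ℕ} (hβ : ∑ a, β a ≠ r + 2) (i j : α) :
    coeff β (pairPoly r i j) = 0 := by
  rw [pairPoly_eq_monomial_mul, coeff_monomial_mul', coeff_sum_X_pow_of_fintype]
  split_ifs with he hs
  · exact absurd (hs ▸ sum_sub_single_add_single he).symm hβ
  · simp
  · rfl

theorem coeff_pairPoly_mul_prod_factorial {r : ℕ} {β : α →₀ ℕ} (hβ : ∑ a, β a = r + 2)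
    (i j : α) :
    coeff β (pairPoly r i j) * ∏ a, ((β a)! : ℝ) =
      r ! * (β i * β j - if i = j then (β i : ℝ) else 0) := by
  rw [← prod_descFactorial_single_add_single, pairPoly_eq_monomial_mul, coeff_monomial_mul',
    coeff_sum_X_pow_of_fintype]
  by_cases he : Finsupp.single i 1 + Finsupp.single j 1 ≤ β
  · have hsum := sum_sub_single_add_single he
    set e := Finsupp.single i 1 + Finsupp.single j 1
    replace hsum : (β - e).sum (fun _ m => m) = r := by omega
    have hspec := Nat.multinomial_spec univ (β - e)
    rw [← Finsupp.sum_fintype (β - e) (fun _ m => m) fun _ => rfl, hsum] at hspec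
    rw [if_pos he, if_pos hsum, one_mul, Finsupp.multinomial_eq_of_support_subset (subset_univ _),
      ← prod_congr rfl fun a _ => congrArg (Nat.cast (R := ℝ))
        (Nat.factorial_mul_descFactorial (he a)), ← hspec]
    push_cast
    simp only [prod_mul_distrib, Pi.sub_apply]
    ring
  · obtain ⟨a, ha⟩ : ∃ a, β a < (Finsupp.single i 1 + Finsupp.single j 1 : α →₀ ℕ) a := by
      simpa [Finsupp.le_def] using he
    rw [if_neg he, zero_mul, prod_eq_zero (mem_univ a)
      (by rw [Nat.descFactorial_eq_zero_iff_lt.2 ha, Nat.cast_zero]), mul_zero]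

end PairPoly

theorem Fintype.prod_mul_sub_eq_sum {κ R : Type*} [Fintype κ] [DecidableEq κ] [CommRing R]
    (s x y : κ → R) :
    ∏ k, (s k * x k - y k) =
      ∑ S : Finset κ, (-1) ^ Sᶜ.card * (∏ k ∈ S, s k) * ∏ k, if k ∈ S then x k else y k := by
  simp_rw [sub_eq_add_neg, Fintype.prod_add, prod_ite, prod_mul_distrib, prod_neg]
  refine Fintype.sum_congr _ _ fun S => ?_
  simp only [filter_mem_eq_inter, univ_inter, filter_not, ← compl_eq_univ_sdiff]
  ring

theorem le_sum_neg_one_pow_mul_mul {ι : Type*} (t : Finset ι) (n : ι → ℕ) {c E : ι → ℝ} {m M : ℝ}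
    (hc : ∀ i ∈ t, 0 ≤ c i) (hE : ∀ i ∈ t, m ≤ E i ∧ E i ≤ M) :
    m * ∑ i ∈ t, (-1) ^ n i * c i - (M - m) * ∑ i ∈ t with Odd (n i), c i ≤
      ∑ i ∈ t, (-1) ^ n i * c i * E i := by
  rw [sum_filter, mul_sum, mul_sum, ← sum_sub_distrib]
  refine sum_le_sum fun i hi => ?_
  obtain ⟨hm, hM⟩ := hE i hi
  have hci := hc i hi
  rcases Nat.even_or_odd (n i) with h | h
  · simp only [h.neg_one_pow, Nat.not_odd_iff_even.2 h, if_false]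
    nlinarith
  · simp only [h.neg_one_pow, h, if_true]
    nlinarith

section MultiQuad
variable {d : ℕ} {nn : Fin d → ℕ}

lemma sum_prod_eq_one {x : (k : Fin d) → Fin (nn k) → ℝ} (hx : ∀ k, ∑ a, x k a = 1) :
    ∑ i : (k : Fin d) → Fin (nn k), ∏ k, x k (i k) = 1 := by
  rw [← Fintype.prod_sum]
  simp [hx]

lemma multiQuadForm_sub_const (A : ((k : Fin d) → Fin (nn k)) → ((k : Fin d) → Fin (nn k)) → ℝ)
    (c : ℝ) {x : (k : Fin d) → Fin (nn k) → ℝ} (hx : ∀ k, ∑ a, x k a = 1) :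
    multiQuadForm (fun i j => A i j - c) x = multiQuadForm A x - c := by
  simp only [multiQuadForm, sub_mul, sum_sub_distrib, prod_mul_distrib, ← mul_assoc, ← sum_mul,
    ← mul_sum, sum_prod_eq_one hx]
  ring

def vertexMix (z : (k : Fin d) → Fin (nn k) → ℝ) (S : Finset (Fin d))
    (v : (k : Fin d) → Fin (nn k)) : (k : Fin d) → Fin (nn k) → ℝ :=
  fun k => if k ∈ S then z k else Pi.single (v k) 1

lemma vertexMix_mem_stdSimplex {z : (k : Fin d) → Fin (nn k) → ℝ}
    (hz : ∀ k, z k ∈ stdSimplex ℝ (Fin (nn k))) (S : Finset (Fin d))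
    (v : (k : Fin d) → Fin (nn k)) (k : Fin d) : vertexMix z S v k ∈ stdSimplex ℝ (Fin (nn k)) := by
  unfold vertexMix
  split_ifs
  exacts [hz k, single_mem_stdSimplex ℝ (v k)]

def mixedForm (A : ((k : Fin d) → Fin (nn k)) → ((k : Fin d) → Fin (nn k)) → ℝ)
    (z : (k : Fin d) → Fin (nn k) → ℝ) (S : Finset (Fin d)) : ℝ :=
  ∑ i, ∑ j, A i j * ∏ k,
    if k ∈ S then z k (i k) * z k (j k) else if i k = j k then z k (i k) else 0

lemma mixedForm_eq_sum_prod_mul_multiQuadForm_vertexMix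
    (A : ((k : Fin d) → Fin (nn k)) → ((k : Fin d) → Fin (nn k)) → ℝ)
    {z : (k : Fin d) → Fin (nn k) → ℝ} (hz : ∀ k, ∑ a, z k a = 1) (S : Finset (Fin d)) :
    mixedForm A z S = ∑ v, (∏ k, z k (v k)) * multiQuadForm A (vertexMix z S v) := by
  have hblock : ∀ (k : Fin d) (i j : Fin (nn k)),
      (∑ a, z k a * ((if k ∈ S then z k else Pi.single a 1) i *
        (if k ∈ S then z k else Pi.single a 1) j)) =
      if k ∈ S then z k i * z k j else if i = j then z k i else 0 := by
    intro k i j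
    by_cases hk : k ∈ S
    · simp [hk, ← sum_mul, hz]
    · by_cases hij : i = j <;> simp [hk, Pi.single_apply, hij]
  symm
  simp only [mixedForm, multiQuadForm, mul_sum]
  rw [sum_comm]
  refine sum_congr rfl fun i _ => ?_
  rw [sum_comm]
  refine sum_congr rfl fun j _ => ?_
  simp only [← hblock, Fintype.prod_sum, mul_sum]
  refine sum_congr rfl fun v _ => ?_
  simp only [vertexMix, prod_mul_distrib]
  ring

lemma mixedForm_mem_Icc {A : ((k : Fin d) → Fin (nn k)) → ((k : Fin d) → Fin (nn k)) → ℝ}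
    {m M : ℝ} (hbound : ∀ x : (k : Fin d) → Fin (nn k) → ℝ,
      (∀ k, x k ∈ stdSimplex ℝ (Fin (nn k))) → multiQuadForm A x ∈ Set.Icc m M)
    {z : (k : Fin d) → Fin (nn k) → ℝ} (hz : ∀ k, z k ∈ stdSimplex ℝ (Fin (nn k)))
    (S : Finset (Fin d)) : mixedForm A z S ∈ Set.Icc m M := by
  have hw : ∀ v : (k : Fin d) → Fin (nn k), 0 ≤ ∏ k, z k (v k) :=
    fun v => prod_nonneg fun k _ => (hz k).1 _
  have hw1 : ∑ v : (k : Fin d) → Fin (nn k), ∏ k, z k (v k) = 1 :=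
    sum_prod_eq_one fun k => (hz k).2
  have hval := fun v => hbound _ (vertexMix_mem_stdSimplex hz S v)
  rw [mixedForm_eq_sum_prod_mul_multiQuadForm_vertexMix A fun k => (hz k).2]
  constructor
  · calc m = ∑ v, (∏ k, z k (v k)) * m := by rw [← sum_mul, hw1, one_mul]
      _ ≤ _ := sum_le_sum fun v _ => mul_le_mul_of_nonneg_left (hval v).1 (hw v)
  · calc _ ≤ ∑ v, (∏ k, z k (v k)) * M :=
          sum_le_sum fun v _ => mul_le_mul_of_nonneg_left (hval v).2 (hw v)
      _ = M := by rw [← sum_mul, hw1, one_mul]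

theorem sum_sub_mul_prod_nonneg
    {A : ((k : Fin d) → Fin (nn k)) → ((k : Fin d) → Fin (nn k)) → ℝ} (r : Fin d → ℕ)
    {m M : ℝ} (hbound : ∀ x : (k : Fin d) → Fin (nn k) → ℝ,
      (∀ k, x k ∈ stdSimplex ℝ (Fin (nn k))) → multiQuadForm A x ∈ Set.Icc m M)
    {z : (k : Fin d) → Fin (nn k) → ℝ} (hz : ∀ k, z k ∈ stdSimplex ℝ (Fin (nn k))) :
    0 ≤ ∑ i, ∑ j, (A i j - (m - tauCoeff r / (∏ k, ((r k : ℝ) + 1)) * (M - m))) *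
      ∏ k, (((r k : ℝ) + 2) * (z k (i k) * z k (j k)) - if i k = j k then z k (i k) else 0) := by
  set c := m - tauCoeff r / (∏ k, ((r k : ℝ) + 1)) * (M - m)
  have hexpand : ∑ i, ∑ j, (A i j - c) *
      ∏ k, (((r k : ℝ) + 2) * (z k (i k) * z k (j k)) - if i k = j k then z k (i k) else 0) =
      ∑ S : Finset (Fin d), (-1) ^ Sᶜ.card * (∏ k ∈ S, ((r k : ℝ) + 2)) *
        mixedForm (fun i j => A i j - c) z S := by
    simp only [Fintype.prod_mul_sub_eq_sum, mixedForm, mul_sum]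
    refine (sum_congr rfl fun i _ => sum_comm).trans (sum_comm.trans ?_)
    exact sum_congr rfl fun S _ => sum_congr rfl fun i _ => sum_congr rfl fun j _ => by ring
  have hshift : ∀ x : (k : Fin d) → Fin (nn k) → ℝ, (∀ k, x k ∈ stdSimplex ℝ (Fin (nn k))) →
      multiQuadForm (fun i j => A i j - c) x ∈ Set.Icc (m - c) (M - c) := by
    intro x hx
    rw [multiQuadForm_sub_const A c fun k => (hx k).2]
    exact ⟨by linarith [(hbound x hx).1], by linarith [(hbound x hx).2]⟩
  have hsigned : ∑ S : Finset (Fin d), (-1) ^ Sᶜ.card * ∏ k ∈ S, ((r k : ℝ) + 2) =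
      ∏ k, ((r k : ℝ) + 1) := by
    have := Fintype.prod_mul_sub_eq_sum (fun k => (r k : ℝ) + 2) 1 1
    simp only [Pi.one_apply, mul_one, ite_self, prod_const_one] at this
    rw [← this]
    exact prod_congr rfl fun k _ => by ring
  have htau : ∑ S : Finset (Fin d) with Odd Sᶜ.card, ∏ k ∈ S, ((r k : ℝ) + 2) = tauCoeff r := by
    simp [tauCoeff, card_compl]
  have hP : 0 < ∏ k, ((r k : ℝ) + 1) := prod_pos fun k _ => by positivity
  have hlower := le_sum_neg_one_pow_mul_mul univ (fun S => Sᶜ.card)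
    (c := fun S => ∏ k ∈ S, ((r k : ℝ) + 2)) (fun S _ => prod_nonneg fun k _ => by positivity)
    (fun S _ => mixedForm_mem_Icc hshift hz S)
  rw [hsigned, htau] at hlower
  rw [hexpand]
  refine (le_of_eq ?_).trans hlower
  simp only [c]
  field_simp
  ring

end MultiQuad

section Coefficients
open Nat
variable {d : ℕ} {nn : Fin d → ℕ}

lemma coeff_multiQuadPoly (G : ((k : Fin d) → Fin (nn k)) → ((k : Fin d) → Fin (nn k)) → ℝ)
    (r : Fin d → ℕ) (μ : ((k : Fin d) × Fin (nn k)) →₀ ℕ) :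
    coeff μ (multiQuadPoly G r) =
      ∑ i, ∑ j, G i j * ∏ k, coeff (μ.split k) (pairPoly (r k) (i k) (j k)) := by
  have : multiQuadPoly G r =
      ∑ i, ∑ j, C (G i j) * ∏ k, rename (Sigma.mk k) (pairPoly (r k) (i k) (j k)) := by
    simp only [multiQuadPoly, pairPoly, map_mul, map_pow, map_sum, rename_X, prod_mul_distrib,
      sum_mul, mul_assoc]
  simp only [this, coeff_sum, coeff_C_mul, MvPolynomial.coeff_prod_rename_sigmaMk]

theorem coeff_multiQuadPoly_nonneg
    {A : ((k : Fin d) → Fin (nn k)) → ((k : Fin d) → Fin (nn k)) → ℝ} (r : Fin d → ℕ)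
    {m M : ℝ} (hbound : ∀ x : (k : Fin d) → Fin (nn k) → ℝ,
      (∀ k, x k ∈ stdSimplex ℝ (Fin (nn k))) → multiQuadForm A x ∈ Set.Icc m M)
    (μ : ((k : Fin d) × Fin (nn k)) →₀ ℕ) :
    0 ≤ coeff μ (multiQuadPoly
      (fun i j => A i j - (m - tauCoeff r / (∏ k, ((r k : ℝ) + 1)) * (M - m))) r) := by
  rw [coeff_multiQuadPoly]
  by_cases hμ : ∀ k, ∑ a, μ.split k a = r k + 2
  · set z : (k : Fin d) → Fin (nn k) → ℝ := fun k a => μ.split k a / ((r k : ℝ) + 2)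
    have hz : ∀ k, z k ∈ stdSimplex ℝ (Fin (nn k)) := fun k =>
      ⟨fun a => by positivity, by rw [← sum_div, ← Nat.cast_sum, hμ k]; push_cast; field_simp⟩
    have hblock : ∀ i j : (k : Fin d) → Fin (nn k),
        (∏ k, coeff (μ.split k) (pairPoly (r k) (i k) (j k))) * ∏ k, ∏ a, ((μ.split k a)! : ℝ) =
          (∏ k, ((r k)! * ((r k : ℝ) + 2))) *
            ∏ k, (((r k : ℝ) + 2) * (z k (i k) * z k (j k)) -
              if i k = j k then z k (i k) else 0) := by
      intro i j
      rw [← prod_mul_distrib, ← prod_mul_distrib]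
      refine prod_congr rfl fun k _ => ?_
      rw [coeff_pairPoly_mul_prod_factorial (hμ k)]
      simp only [z]
      split_ifs with h
      · rw [h]
        field_simp
      · field_simp
        ring
    have hF : 0 < ∏ k, ∏ a, ((μ.split k a)! : ℝ) :=
      prod_pos fun k _ => prod_pos fun a _ => by positivity
    refine (mul_nonneg_iff_of_pos_right hF).1 ?_
    simp only [sum_mul, mul_assoc, hblock, mul_left_comm _ (∏ k, ((r k)! * ((r k : ℝ) + 2))),
      ← mul_sum]
    exact mul_nonneg (prod_nonneg fun k _ => by positivity)
      (sum_sub_mul_prod_nonneg r hbound hz)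
  · obtain ⟨k, hk⟩ := not_forall.1 hμ
    refine (sum_eq_zero fun i _ => sum_eq_zero fun j _ => ?_).symm.le
    have hzero : ∏ k, coeff (μ.split k) (pairPoly (r k) (i k) (j k)) = 0 :=
      prod_eq_zero (mem_univ k) (coeff_pairPoly_eq_zero hk (i k) (j k))
    rw [hzero, mul_zero]

lemma le_multiQuadForm_of_coeff_nonneg
    {A : ((k : Fin d) → Fin (nn k)) → ((k : Fin d) → Fin (nn k)) → ℝ} {r : Fin d → ℕ} {c : ℝ}
    (hc : ∀ μ, 0 ≤ coeff μ (multiQuadPoly (fun i j => A i j - c) r))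
    {x : (k : Fin d) → Fin (nn k) → ℝ} (hx : ∀ k, x k ∈ stdSimplex ℝ (Fin (nn k))) :
    c ≤ multiQuadForm A x := by
  have heval : eval (fun p => x p.1 p.2) (multiQuadPoly (fun i j => A i j - c) r) =
      multiQuadForm A x - c := by
    simp only [multiQuadPoly, map_mul, map_sum, map_prod, map_pow, eval_C, eval_X, (hx _).2,
      one_pow, prod_const_one, mul_one]
    exact multiQuadForm_sub_const A c fun k => (hx k).2
  have : 0 ≤ eval (fun p => x p.1 p.2) (multiQuadPoly (fun i j => A i j - c) r) := by
    rw [eval_eq]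
    exact sum_nonneg fun μ _ =>
      mul_nonneg (hc μ) (prod_nonneg fun p _ => pow_nonneg ((hx p.1).1 p.2) _)
  linarith

end Coefficients

lemma isCompact_multiQuadForm_values {d : ℕ} {nn : Fin d → ℕ}
    (A : ((k : Fin d) → Fin (nn k)) → ((k : Fin d) → Fin (nn k)) → ℝ) :
    IsCompact {v : ℝ | ∃ x : (k : Fin d) → Fin (nn k) → ℝ,
      (∀ k, x k ∈ stdSimplex ℝ (Fin (nn k))) ∧ v = multiQuadForm A x} := by
  have : {v : ℝ | ∃ x : (k : Fin d) → Fin (nn k) → ℝ,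
      (∀ k, x k ∈ stdSimplex ℝ (Fin (nn k))) ∧ v = multiQuadForm A x} =
      multiQuadForm A '' Set.univ.pi fun k => stdSimplex ℝ (Fin (nn k)) := by
    ext v
    simp [eq_comm]
  rw [this]
  exact (isCompact_univ_pi fun k => isCompact_stdSimplex _ _).image
    (by unfold multiQuadForm; fun_prop)

theorem multiQuad_pmin_sub_pC_bound_general (d : ℕ) (nn : Fin d → ℕ)
    (hnn : ∀ k, 0 < nn k)
    (A : ((k : Fin d) → Fin (nn k)) → ((k : Fin d) → Fin (nn k)) → ℝ)
    (r : Fin d → ℕ) :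
    sInf {v : ℝ | ∃ x : (k : Fin d) → Fin (nn k) → ℝ,
        (∀ k, x k ∈ stdSimplex ℝ (Fin (nn k))) ∧ v = multiQuadForm A x} -
      sSup {lam : ℝ | ∀ μ : ((k : Fin d) × Fin (nn k)) →₀ ℕ,
        0 ≤ (multiQuadPoly (fun i j => A i j - lam) r).coeff μ} ≤
    (tauCoeff r / ∏ k, ((r k : ℝ) + 1)) *
      (sSup {v : ℝ | ∃ x : (k : Fin d) → Fin (nn k) → ℝ,
          (∀ k, x k ∈ stdSimplex ℝ (Fin (nn k))) ∧ v = multiQuadForm A x} -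
        sInf {v : ℝ | ∃ x : (k : Fin d) → Fin (nn k) → ℝ,
          (∀ k, x k ∈ stdSimplex ℝ (Fin (nn k))) ∧ v = multiQuadForm A x}) := by
  have hV := isCompact_multiQuadForm_values A
  have hbound : ∀ x : (k : Fin d) → Fin (nn k) → ℝ, (∀ k, x k ∈ stdSimplex ℝ (Fin (nn k))) →
      multiQuadForm A x ∈ Set.Icc (sInf _) (sSup _) := fun x hx =>
    ⟨csInf_le hV.bddBelow ⟨x, hx, rfl⟩, le_csSup hV.bddAbove ⟨x, hx, rfl⟩⟩
  have hbdd : BddAbove {lam : ℝ | ∀ μ : ((k : Fin d) × Fin (nn k)) →₀ ℕ,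
      0 ≤ (multiQuadPoly (fun i j => A i j - lam) r).coeff μ} :=
    ⟨_, fun c hc => le_multiQuadForm_of_coeff_nonneg hc
      fun k => single_mem_stdSimplex ℝ (⟨0, hnn k⟩ : Fin (nn k))⟩
  have hmem := le_csSup hbdd (coeff_multiQuadPoly_nonneg r hbound)
  linarith

/-- **first half of Theorem 6.** For the standard multi-quadratic program,
`p_A^min − p_C^{(r_1,…,r_d)} ≤ τ(r_1,…,r_d;d)/∏_i(r_i+1) · (p_A^max − p_A^min)`, where
`p_C^{(r_1,…,r_d)} = sup{λ : A − λE ∈ C^{r_1,…,r_d}}`. -/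
theorem multiQuad_pmin_sub_pC_bound (d : ℕ) (hd : 0 < d) (nn : Fin d → ℕ)
    (hnn : ∀ k, 0 < nn k)
    (A : ((k : Fin d) → Fin (nn k)) → ((k : Fin d) → Fin (nn k)) → ℝ)
    (hsym : ∀ (i j : (k : Fin d) → Fin (nn k)) (k : Fin d),
      A i j = A (Function.update i k (j k)) (Function.update j k (i k)))
    (r : Fin d → ℕ) :
    sInf {v : ℝ | ∃ x : (k : Fin d) → Fin (nn k) → ℝ,
        (∀ k, x k ∈ stdSimplex ℝ (Fin (nn k))) ∧ v = multiQuadForm A x} -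
      sSup {lam : ℝ | ∀ μ : ((k : Fin d) × Fin (nn k)) →₀ ℕ,
        0 ≤ (multiQuadPoly (fun i j => A i j - lam) r).coeff μ} ≤
    (tauCoeff r / ∏ k, ((r k : ℝ) + 1)) *
      (sSup {v : ℝ | ∃ x : (k : Fin d) → Fin (nn k) → ℝ,
          (∀ k, x k ∈ stdSimplex ℝ (Fin (nn k))) ∧ v = multiQuadForm A x} -
        sInf {v : ℝ | ∃ x : (k : Fin d) → Fin (nn k) → ℝ,
          (∀ k, x k ∈ stdSimplex ℝ (Fin (nn k))) ∧ v = multiQuadForm A x}) :=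
  multiQuad_pmin_sub_pC_bound_general d nn hnn A r
end

section
/- Let A be a partially symmetric multi-quadratic tensor with d blocks of sizes n_1,…,n_d, and let r_1,…,r_d be nonnegative integers. Then p_Δ^{(r_1,…,r_d)} − p_A^min ≤ [τ(r_1,…,r_d;d) / ∏_{i=1}^d (r_i+2)] (p_A^max − p_A^min), where p_Δ^{(r_1,…,r_d)} = min{ p_A(x^{(1)},…,x^{(d)}) : x^{(k)} ∈ Δ_{n_k}(r_k), k = 1,…,d } and τ(r_1,…,r_d;d) = Σ_{ν ∈ {0,1}^d, d−|ν| odd} ∏_{k=1}^d (r_k+2)^{ν_k}. -/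
open Finset

section ProductWeights

variable {ι κ R : Type*} [Fintype ι] [Fintype κ] [DecidableEq κ] [CommSemiring R]

theorem sum_prod_mul_prod (X : ι → R) (g : κ → ι → R) :
    ∑ t : κ → ι, (∏ l, X (t l)) * ∏ l, g l (t l) = ∏ l, ∑ a, X a * g l a := by
  simp_rw [← prod_mul_distrib]
  exact (Fintype.prod_sum fun l a => X a * g l a).symm

variable {X : ι → R}

theorem sum_prod_mul_apply (hX : ∑ a, X a = 1) (m : κ) (g : ι → R) :
    ∑ t : κ → ι, (∏ l, X (t l)) * g (t m) = ∑ a, X a * g a := by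
  simpa [apply_ite, hX] using sum_prod_mul_prod X fun l a => if l = m then g a else 1

theorem sum_prod_mul_apply_mul_apply (hX : ∑ a, X a = 1) {m m' : κ} (h : m ≠ m')
    (g g' : ι → R) :
    ∑ t : κ → ι, (∏ l, X (t l)) * (g (t m) * g' (t m')) =
      (∑ a, X a * g a) * ∑ a, X a * g' a := by
  have key := sum_prod_mul_prod X fun l a => if l = m then g a else if l = m' then g' a else 1
  rw [Fintype.prod_eq_mul m m' h (by intro l hl; simp [hl.1, hl.2, hX])] at key
  have hprod (t : κ → ι) :
      (∏ l, if l = m then g (t l) else if l = m' then g' (t l) else 1) = g (t m) * g' (t m') := by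
    rw [Fintype.prod_eq_mul m m' h (by intro l hl; simp [hl.1, hl.2])]
    simp [h.symm]
  simpa [hprod, h.symm] using key

end ProductWeights

section Empirical

variable {ι : Type*} [DecidableEq ι] {n : ℕ}

noncomputable def empiricalDist (t : Fin n → ι) (a : ι) : ℝ := (#{m | t m = a} : ℝ) / n

theorem natCast_mul_empiricalDist (hn : 0 < n) (t : Fin n → ι) (a : ι) :
    (n : ℝ) * empiricalDist t a = #{m | t m = a} := by
  unfold empiricalDist
  field_simp

variable [Fintype ι]

theorem empiricalDist_mem_stdSimplex (hn : 0 < n) (t : Fin n → ι) :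
    empiricalDist t ∈ stdSimplex ℝ ι := by
  have hcount : ∑ a, (#{m | t m = a} : ℝ) = n := by
    exact_mod_cast (card_eq_sum_card_fiberwise fun m _ => mem_univ (t m)).symm.trans (card_fin n)
  refine ⟨fun a => by unfold empiricalDist; positivity, ?_⟩
  simp only [empiricalDist, ← sum_div, hcount]
  exact div_self (by positivity)

variable {X : ι → ℝ}

theorem sum_prod_mul_empiricalDist_mul (hX : ∑ a, X a = 1) (hn : 0 < n) (a b : ι) :
    ∑ t : Fin n → ι, (∏ l, X (t l)) * (empiricalDist t a * empiricalDist t b) =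
      (1 - (n : ℝ)⁻¹) * (X a * X b) + (n : ℝ)⁻¹ * (if a = b then X a else 0) := by
  -- Two distinct draws are independent; a draw paired with itself gives the diagonal term.
  have hpair (m m' : Fin n) : ∑ t : Fin n → ι, (∏ l, X (t l)) *
      ((if t m = a then 1 else 0) * (if t m' = b then 1 else 0)) =
      X a * X b + if m = m' then (if a = b then X a else 0) - X a * X b else 0 := by
    by_cases h : m = m'
    · subst h
      refine (sum_prod_mul_apply hX m fun i =>
        (if i = a then 1 else 0) * (if i = b then 1 else 0)).trans ?_
      by_cases hab : a = b
      · subst hab; simp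
      · simp [hab, Ne.symm hab]
    · refine (sum_prod_mul_apply_mul_apply hX h (fun i => if i = a then 1 else 0)
        (fun i => if i = b then 1 else 0)).trans ?_
      simp [h]
  have hsq (t : Fin n → ι) : empiricalDist t a * empiricalDist t b = ((n : ℝ) ^ 2)⁻¹ *
      ∑ m, ∑ m', (if t m = a then 1 else 0) * (if t m' = b then 1 else 0) := by
    simp only [empiricalDist, natCast_card_filter, ← sum_mul_sum]
    ring
  have hn' : (n : ℝ) ≠ 0 := by positivity
  calc _ = ((n : ℝ) ^ 2)⁻¹ * ∑ m, ∑ m', ∑ t : Fin n → ι, (∏ l, X (t l)) *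
        ((if t m = a then 1 else 0) * (if t m' = b then 1 else 0)) := by
        simp only [hsq, mul_sum, mul_left_comm _ (((n : ℝ) ^ 2)⁻¹)]
        rw [sum_comm]
        exact sum_congr rfl fun m _ => sum_comm
    _ = _ := by
        simp only [hpair, sum_add_distrib, sum_ite_eq, mem_univ, if_true, sum_const, card_univ,
          Fintype.card_fin, nsmul_eq_mul]
        field_simp
        ring

theorem sum_prod_mul_quadratic_empiricalDist (hX : ∑ a, X a = 1) (hn : 0 < n)
    (Q : ι → ι → ℝ) :
    ∑ t : Fin n → ι, (∏ l, X (t l)) *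
        ∑ a, ∑ b, Q a b * (empiricalDist t a * empiricalDist t b) =
      (1 - (n : ℝ)⁻¹) * ∑ a, ∑ b, Q a b * (X a * X b) + (n : ℝ)⁻¹ * ∑ a, X a * Q a a := by
  simp only [mul_sum, mul_left_comm _ (Q _ _)]
  rw [sum_comm]
  simp only [sum_comm (γ := Fin n → ι), ← mul_sum, sum_prod_mul_empiricalDist_mul hX hn]
  simp only [mul_add, mul_ite, mul_zero, sum_add_distrib, sum_ite_eq, mem_univ, if_true]
  rw [mul_sum]
  exact congrArg _ (sum_congr rfl fun a _ => by ring)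

theorem exists_empiricalDist_quadratic_le (hX : X ∈ stdSimplex ℝ ι) (hn : 0 < n)
    (Q : ι → ι → ℝ) :
    ∃ t : Fin n → ι, ∑ a, ∑ b, Q a b * (empiricalDist t a * empiricalDist t b) ≤
      (1 - (n : ℝ)⁻¹) * ∑ a, ∑ b, Q a b * (X a * X b) + (n : ℝ)⁻¹ * ∑ a, X a * Q a a := by
  have hw₁ : ∑ t : Fin n → ι, ∏ l, X (t l) = 1 := by simp [← Fintype.sum_pow, hX.2]
  -- Some sample does at least as well as the average over all samples.
  obtain ⟨t, -, ht⟩ := (concaveOn_id convex_univ).exists_le_of_centerMass (t := univ)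
    (w := fun t => ∏ l, X (t l))
    (p := fun t => ∑ a, ∑ b, Q a b * (empiricalDist t a * empiricalDist t b))
    (fun t _ => prod_nonneg fun l _ => hX.1 _) (hw₁ ▸ one_pos) (by simp)
  refine ⟨t, ht.trans_eq ?_⟩
  rw [centerMass_eq_of_sum_1 _ _ hw₁]
  exact sum_prod_mul_quadratic_empiricalDist hX.2 hn Q

end Empirical

section MultiQuadratic

variable {d : ℕ} {nn : Fin d → ℕ}

def simplexProduct (nn : Fin d → ℕ) : Set ((k : Fin d) → Fin (nn k) → ℝ) :=
  Set.univ.pi fun k => stdSimplex ℝ (Fin (nn k))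

variable (A : ((k : Fin d) → Fin (nn k)) → ((k : Fin d) → Fin (nn k)) → ℝ)

def blockMatrix (x : (k : Fin d) → Fin (nn k) → ℝ) (k : Fin d) (a b : Fin (nn k)) : ℝ :=
  ∑ i with i k = a, ∑ j with j k = b, A i j * ∏ l ∈ univ.erase k, (x l (i l) * x l (j l))

theorem multiQuadForm_update (x : (k : Fin d) → Fin (nn k) → ℝ) (k : Fin d)
    (z : Fin (nn k) → ℝ) :
    multiQuadForm A (Function.update x k z) =
      ∑ a, ∑ b, blockMatrix A x k a b * (z a * z b) := by
  have hprod (i j : (k : Fin d) → Fin (nn k)) :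
      ∏ l, (Function.update x k z l (i l) * Function.update x k z l (j l)) =
        (∏ l ∈ univ.erase k, (x l (i l) * x l (j l))) * (z (i k) * z (j k)) := by
    rw [← mul_prod_erase _ _ (mem_univ k), mul_comm, Function.update_self]
    congr 1
    refine prod_congr rfl fun l hl => ?_
    rw [Function.update_of_ne (ne_of_mem_erase hl)]
  simp only [multiQuadForm, hprod, blockMatrix, sum_mul]
  rw [← sum_fiberwise univ (fun i => i k)]
  refine sum_congr rfl fun a _ => ?_
  conv_rhs => rw [Finset.sum_comm]
  refine sum_congr rfl fun i hi => ?_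
  obtain rfl := (mem_filter.1 hi).2
  rw [← sum_fiberwise univ (fun j => j k)]
  refine sum_congr rfl fun b _ => sum_congr rfl fun j hj => ?_
  obtain rfl := (mem_filter.1 hj).2
  ring

theorem multiQuadForm_eq_sum_blockMatrix (x : (k : Fin d) → Fin (nn k) → ℝ) (k : Fin d) :
    multiQuadForm A x = ∑ a, ∑ b, blockMatrix A x k a b * (x k a * x k b) := by
  simpa using multiQuadForm_update A x k (x k)

theorem multiQuadForm_update_single (x : (k : Fin d) → Fin (nn k) → ℝ) (k : Fin d)
    (a : Fin (nn k)) :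
    multiQuadForm A (Function.update x k (Pi.single a 1)) = blockMatrix A x k a a := by
  simp [multiQuadForm_update, Pi.single_apply]

theorem exists_grid_update_le {x : (k : Fin d) → Fin (nn k) → ℝ} (hx : x ∈ simplexProduct nn)
    (k : Fin d) {n : ℕ} (hn : 0 < n) {M : ℝ}
    (hM : ∀ y ∈ simplexProduct nn, multiQuadForm A y ≤ M) :
    ∃ z ∈ stdSimplex ℝ (Fin (nn k)), (∀ a, ∃ c : ℕ, (n : ℝ) * z a = c) ∧
      multiQuadForm A (Function.update x k z) ≤
        (1 - (n : ℝ)⁻¹) * multiQuadForm A x + (n : ℝ)⁻¹ * M := by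
  have hxk : x k ∈ stdSimplex ℝ (Fin (nn k)) := hx k (Set.mem_univ k)
  have hdiag : ∑ a, x k a * blockMatrix A x k a a ≤ M := calc
    ∑ a, x k a * blockMatrix A x k a a ≤ ∑ a, x k a * M := by
      refine sum_le_sum fun a _ => mul_le_mul_of_nonneg_left ?_ (hxk.1 a)
      rw [← multiQuadForm_update_single]
      exact hM _ ((Set.update_mem_pi_iff_of_mem hx).2 fun _ => single_mem_stdSimplex ℝ a)
    _ = M := by rw [← sum_mul, hxk.2, one_mul]
  obtain ⟨t, ht⟩ := exists_empiricalDist_quadratic_le hxk hn (blockMatrix A x k)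
  refine ⟨empiricalDist t, empiricalDist_mem_stdSimplex hn t,
    fun a => ⟨_, natCast_mul_empiricalDist hn t a⟩, ?_⟩
  rw [multiQuadForm_update, multiQuadForm_eq_sum_blockMatrix A x k]
  exact ht.trans (by gcongr)

theorem exists_grid_le_add {x : (k : Fin d) → Fin (nn k) → ℝ} (hx : x ∈ simplexProduct nn)
    {n : Fin d → ℕ} (hn : ∀ k, 0 < n k) {M m : ℝ}
    (hM : ∀ y ∈ simplexProduct nn, multiQuadForm A y ≤ M)
    (hm : ∀ y ∈ simplexProduct nn, m ≤ multiQuadForm A y) (s : Finset (Fin d)) :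
    ∃ y ∈ simplexProduct nn, (∀ k ∈ s, ∀ a, ∃ c : ℕ, (n k : ℝ) * y k a = c) ∧
      multiQuadForm A y ≤ multiQuadForm A x + (∑ k ∈ s, (n k : ℝ)⁻¹) * (M - m) := by
  induction s using Finset.induction_on with
  | empty => exact ⟨x, hx, by simp, by simp⟩
  | @insert k s hk ih =>
    obtain ⟨y, hy, hgrid, hyx⟩ := ih
    obtain ⟨z, hz, hzgrid, hzy⟩ := exists_grid_update_le A hy k (hn k) hM
    refine ⟨Function.update y k z, (Set.update_mem_pi_iff_of_mem hy).2 fun _ => hz, ?_, ?_⟩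
    · intro l hl a
      by_cases hlk : l = k
      · subst hlk
        simpa using hzgrid a
      · simpa [hlk] using hgrid l ((mem_insert.1 hl).resolve_left hlk) a
    · have hmy := mul_le_mul_of_nonneg_left (hm y hy) (inv_nonneg.2 (n k).cast_nonneg)
      rw [sum_insert hk]
      linarith

theorem continuous_multiQuadForm : Continuous (multiQuadForm A) := by
  unfold multiQuadForm
  fun_prop

end MultiQuadratic

theorem sum_inv_le_tauCoeff_div {d : ℕ} (r : Fin d → ℕ) :
    ∑ k, ((r k : ℝ) + 2)⁻¹ ≤ tauCoeff r / ∏ k, ((r k : ℝ) + 2) := by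
  have hpos (k : Fin d) : (0 : ℝ) < r k + 2 := by positivity
  rw [le_div_iff₀ (prod_pos fun k _ => hpos k), sum_mul]
  calc ∑ k, ((r k : ℝ) + 2)⁻¹ * ∏ l, ((r l : ℝ) + 2)
      = ∑ k, ∏ l ∈ univ.erase k, ((r l : ℝ) + 2) := sum_congr rfl fun k _ => by
        rw [← mul_prod_erase _ _ (mem_univ k), inv_mul_cancel_left₀ (hpos k).ne']
    _ = ∑ S ∈ univ.image (univ.erase ·), ∏ l ∈ S, ((r l : ℝ) + 2) :=
        (sum_image (f := fun S => ∏ l ∈ S, ((r l : ℝ) + 2))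
          fun a _ _ _ => (erase_inj univ (mem_univ a)).1).symm
    _ ≤ tauCoeff r := by
        refine sum_le_sum_of_subset_of_nonneg ?_ fun S _ _ => prod_nonneg fun l _ => (hpos l).le
        simp only [subset_iff, mem_image, mem_univ, true_and, mem_filter, mem_powerset]
        rintro _ ⟨k, rfl⟩
        refine ⟨fun _ _ => trivial, ?_⟩
        rw [card_erase_of_mem (mem_univ k), card_univ, Fintype.card_fin,
          Nat.sub_sub_self (Fin.pos k)]
        exact odd_one

theorem multiQuad_grid_min_sub_pmin_bound_general (d : ℕ) (nn : Fin d → ℕ)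
    (hnn : ∀ k, 0 < nn k)
    (A : ((k : Fin d) → Fin (nn k)) → ((k : Fin d) → Fin (nn k)) → ℝ)
    (r : Fin d → ℕ) :
    sInf {v : ℝ | ∃ x : (k : Fin d) → Fin (nn k) → ℝ,
        (∀ k, x k ∈ stdSimplex ℝ (Fin (nn k))) ∧
        (∀ k a, ∃ t : ℕ, ((r k : ℝ) + 2) * x k a = t) ∧
        v = multiQuadForm A x} -
      sInf {v : ℝ | ∃ x : (k : Fin d) → Fin (nn k) → ℝ,
        (∀ k, x k ∈ stdSimplex ℝ (Fin (nn k))) ∧ v = multiQuadForm A x} ≤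
    (tauCoeff r / ∏ k, ((r k : ℝ) + 2)) *
      (sSup {v : ℝ | ∃ x : (k : Fin d) → Fin (nn k) → ℝ,
          (∀ k, x k ∈ stdSimplex ℝ (Fin (nn k))) ∧ v = multiQuadForm A x} -
        sInf {v : ℝ | ∃ x : (k : Fin d) → Fin (nn k) → ℝ,
          (∀ k, x k ∈ stdSimplex ℝ (Fin (nn k))) ∧ v = multiQuadForm A x}) := by
  have hvalues : {v : ℝ | ∃ x : (k : Fin d) → Fin (nn k) → ℝ,
      (∀ k, x k ∈ stdSimplex ℝ (Fin (nn k))) ∧ v = multiQuadForm A x} =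
      multiQuadForm A '' simplexProduct nn := by
    ext v
    simp [simplexProduct, eq_comm]
  rw [hvalues]
  set V := multiQuadForm A '' simplexProduct nn
  have hcpt : IsCompact V :=
    (isCompact_univ_pi fun k => isCompact_stdSimplex ℝ _).image (continuous_multiQuadForm A)
  have hne : V.Nonempty :=
    ⟨_, fun k => Pi.single ⟨0, hnn k⟩ 1, fun k _ => single_mem_stdSimplex ℝ _, rfl⟩
  obtain ⟨x, hx, hxmin⟩ := hcpt.sInf_mem hne
  obtain ⟨y, hy, hgrid, hyx⟩ := exists_grid_le_add A hx (n := fun k => r k + 2) (by simp)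
    (fun y hy => le_csSup hcpt.bddAbove (Set.mem_image_of_mem _ hy))
    (fun y hy => csInf_le hcpt.bddBelow (Set.mem_image_of_mem _ hy)) univ
  refine (sub_le_sub_right (csInf_le ?bdd (?mem : multiQuadForm A y ∈ _)) _).trans ?_
  case bdd =>
    refine hcpt.bddBelow.mono ?_
    rintro _ ⟨z, hz, -, rfl⟩
    exact ⟨z, fun k _ => hz k, rfl⟩
  case mem =>
    exact ⟨y, fun k => hy k (Set.mem_univ k),
      fun k a => by exact_mod_cast hgrid k (mem_univ k) a, rfl⟩
  push_cast at hyx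
  calc multiQuadForm A y - sInf V ≤ (∑ k, ((r k : ℝ) + 2)⁻¹) * (sSup V - sInf V) := by linarith
    _ ≤ _ := mul_le_mul_of_nonneg_right (sum_inv_le_tauCoeff_div r)
        (sub_nonneg.2 (csInf_le_csSup hne hcpt.bddBelow hcpt.bddAbove))

/-- **second half of Theorem 6.** For the standard multi-quadratic program,
`p_Δ^{(r_1,…,r_d)} − p_A^min ≤ τ(r_1,…,r_d;d)/∏_i(r_i+2) · (p_A^max − p_A^min)`, where
`p_Δ^{(r_1,…,r_d)}` is the minimum of `p_A` over the grid `Δ_{n_1}(r_1) × ⋯ × Δ_{n_d}(r_d)`. -/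
theorem multiQuad_grid_min_sub_pmin_bound (d : ℕ) (hd : 0 < d) (nn : Fin d → ℕ)
    (hnn : ∀ k, 0 < nn k)
    (A : ((k : Fin d) → Fin (nn k)) → ((k : Fin d) → Fin (nn k)) → ℝ)
    (hsym : ∀ (i j : (k : Fin d) → Fin (nn k)) (k : Fin d),
      A i j = A (Function.update i k (j k)) (Function.update j k (i k)))
    (r : Fin d → ℕ) :
    sInf {v : ℝ | ∃ x : (k : Fin d) → Fin (nn k) → ℝ,
        (∀ k, x k ∈ stdSimplex ℝ (Fin (nn k))) ∧
        (∀ k a, ∃ t : ℕ, ((r k : ℝ) + 2) * x k a = t) ∧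
        v = multiQuadForm A x} -
      sInf {v : ℝ | ∃ x : (k : Fin d) → Fin (nn k) → ℝ,
        (∀ k, x k ∈ stdSimplex ℝ (Fin (nn k))) ∧ v = multiQuadForm A x} ≤
    (tauCoeff r / ∏ k, ((r k : ℝ) + 2)) *
      (sSup {v : ℝ | ∃ x : (k : Fin d) → Fin (nn k) → ℝ,
          (∀ k, x k ∈ stdSimplex ℝ (Fin (nn k))) ∧ v = multiQuadForm A x} -
        sInf {v : ℝ | ∃ x : (k : Fin d) → Fin (nn k) → ℝ,
          (∀ k, x k ∈ stdSimplex ℝ (Fin (nn k))) ∧ v = multiQuadForm A x}) :=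
  multiQuad_grid_min_sub_pmin_bound_general d nn hnn A r
end
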